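/- arXiv:2311.12400 — 3 statements merged into one kernel-verified Lean document; each statement's English description precedes it below -/
import Mathlib

section
/- For real numbers λ₁,…,λₙ ≥ 0 with sup_{i≠j} λᵢλⱼ ≤ λ₀ < 1 and real numbers a_{ijk} = h_{k,ij} symmetric in the last two indices (i.e. h_{k,ij} = h_{k,ji}), one has 2·∑_{i<j<k} (h_{k,ij}² + h_{j,ki}² + h_{i,jk}² + λᵢλⱼ h_{i,jk} h_{j,ik} + λᵢλ_k h_{i,kj} h_{k,ij} + λⱼλ_k h_{j,ki} h_{k,ji}) ≥ (1−λ₀)·∑_{i,j,k mutually distinct} h_{k,ij}². -/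
open Finset

section aux

variable {n : ℕ}

private lemma swap12 (f : Fin n → Fin n → Fin n → ℝ) :
    ∑ i, ∑ j, ∑ k, f i j k = ∑ i, ∑ j, ∑ k, f j i k := Finset.sum_comm

private lemma swap23 (f : Fin n → Fin n → Fin n → ℝ) :
    ∑ i, ∑ j, ∑ k, f i j k = ∑ i, ∑ j, ∑ k, f i k j :=
  Finset.sum_congr rfl fun _ _ => Finset.sum_comm

private lemma rot1 (f : Fin n → Fin n → Fin n → ℝ) :
    ∑ i, ∑ j, ∑ k, f i j k = ∑ i, ∑ j, ∑ k, f k i j :=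
  (swap12 f).trans (swap23 fun i j k => f j i k)

private lemma rot2 (f : Fin n → Fin n → Fin n → ℝ) :
    ∑ i, ∑ j, ∑ k, f i j k = ∑ i, ∑ j, ∑ k, f j k i :=
  (rot1 f).trans (rot1 fun i j k => f k i j)

private lemma swap13 (f : Fin n → Fin n → Fin n → ℝ) :
    ∑ i, ∑ j, ∑ k, f i j k = ∑ i, ∑ j, ∑ k, f k j i :=
  (rot1 f).trans (swap12 fun i j k => f k i j)

set_option maxHeartbeats 1000000 in
private lemma tri_split (F : Fin n → Fin n → Fin n → ℝ) :
    ∑ i, ∑ j, ∑ k, (if i ≠ j ∧ j ≠ k ∧ i ≠ k then F i j k else 0)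
      = ∑ i, ∑ j, ∑ k, (if i < j ∧ j < k then
          F i j k + F i k j + F j i k + F k i j + F j k i + F k j i else 0) := by
  have key : ∀ i j k : Fin n,
      (if i ≠ j ∧ j ≠ k ∧ i ≠ k then F i j k else 0)
        = (if i < j ∧ j < k then F i j k else 0)
        + (if i < k ∧ k < j then F i j k else 0)
        + (if j < i ∧ i < k then F i j k else 0)
        + (if j < k ∧ k < i then F i j k else 0)
        + (if k < i ∧ i < j then F i j k else 0)
        + (if k < j ∧ j < i then F i j k else 0) := by
    intro i j k
    simp only [Fin.lt_def, ne_eq, Fin.ext_iff]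
    split_ifs <;> first | ring1 | (exfalso; omega)
  have lhs_eq :
      ∑ i, ∑ j, ∑ k, (if i ≠ j ∧ j ≠ k ∧ i ≠ k then F i j k else 0)
        = (∑ i, ∑ j, ∑ k, (if i < j ∧ j < k then F i j k else 0))
        + (∑ i, ∑ j, ∑ k, (if i < k ∧ k < j then F i j k else 0))
        + (∑ i, ∑ j, ∑ k, (if j < i ∧ i < k then F i j k else 0))
        + (∑ i, ∑ j, ∑ k, (if j < k ∧ k < i then F i j k else 0))
        + (∑ i, ∑ j, ∑ k, (if k < i ∧ i < j then F i j k else 0))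
        + (∑ i, ∑ j, ∑ k, (if k < j ∧ j < i then F i j k else 0)) := by
    simp only [← Finset.sum_add_distrib]
    exact Finset.sum_congr rfl fun i _ => Finset.sum_congr rfl fun j _ =>
      Finset.sum_congr rfl fun k _ => key i j k
  rw [lhs_eq]
  rw [swap23 (fun i j k => if i < k ∧ k < j then F i j k else 0)]
  rw [swap12 (fun i j k => if j < i ∧ i < k then F i j k else 0)]
  rw [rot1 (fun i j k => if j < k ∧ k < i then F i j k else 0)]
  rw [rot2 (fun i j k => if k < i ∧ i < j then F i j k else 0)]
  rw [swap13 (fun i j k => if k < j ∧ j < i then F i j k else 0)]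
  simp only [← Finset.sum_add_distrib]
  refine Finset.sum_congr rfl fun i _ => Finset.sum_congr rfl fun j _ =>
    Finset.sum_congr rfl fun k _ => ?_
  by_cases hc : i < j ∧ j < k <;> simp [hc]

end aux

/-- Key algebraic inequality (eqn-BJ66). -/
theorem stmt_0 (n : ℕ) (hn : 3 ≤ n) (lam : Fin n → ℝ) (lam0 : ℝ)
    (hlam : ∀ i, 0 ≤ lam i) (hlam0 : lam0 < 1)
    (hsup : ∀ i j, i ≠ j → lam i * lam j ≤ lam0)
    (h : Fin n → Fin n → Fin n → ℝ) (hsym : ∀ k i j, h k i j = h k j i) :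
    (1 - lam0) * ∑ i : Fin n, ∑ j : Fin n, ∑ k : Fin n,
        (if i ≠ j ∧ j ≠ k ∧ i ≠ k then (h k i j) ^ 2 else 0)
      ≤ 2 * ∑ i : Fin n, ∑ j : Fin n, ∑ k : Fin n,
        (if i < j ∧ j < k then
          (h k i j) ^ 2 + (h j k i) ^ 2 + (h i j k) ^ 2
          + lam i * lam j * (h i j k) * (h j i k)
          + lam i * lam k * (h i k j) * (h k i j)
          + lam j * lam k * (h j k i) * (h k j i)
        else 0) := by
  have h01 : (⟨0, by omega⟩ : Fin n) ≠ ⟨1, by omega⟩ := by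
    simp [Fin.ext_iff]
  have hl0 : 0 ≤ lam0 :=
    le_trans (mul_nonneg (hlam _) (hlam _)) (hsup _ _ h01)
  rw [tri_split (fun i j k => (h k i j) ^ 2)]
  simp only [Finset.mul_sum]
  refine Finset.sum_le_sum fun i _ => Finset.sum_le_sum fun j _ =>
    Finset.sum_le_sum fun k _ => ?_
  by_cases hc : i < j ∧ j < k
  · rw [if_pos hc, if_pos hc]
    obtain ⟨hij, hjk⟩ := hc
    have hij' : i ≠ j := ne_of_lt hij
    have hjk' : j ≠ k := ne_of_lt hjk
    have hik' : i ≠ k := ne_of_lt (hij.trans hjk)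
    have hp : 0 ≤ lam i * lam j := mul_nonneg (hlam i) (hlam j)
    have hq : 0 ≤ lam i * lam k := mul_nonneg (hlam i) (hlam k)
    have hr : 0 ≤ lam j * lam k := mul_nonneg (hlam j) (hlam k)
    have hpl := hsup i j hij'
    have hql := hsup i k hik'
    have hrl := hsup j k hjk'
    rw [hsym j i k, hsym k j i, hsym i k j]
    nlinarith [mul_nonneg hp (sq_nonneg (h i j k + h j k i)),
      mul_nonneg hq (sq_nonneg (h i j k + h k i j)),
      mul_nonneg hr (sq_nonneg (h j k i + h k i j)),
      mul_nonneg (sub_nonneg.2 hpl)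
        (add_nonneg (sq_nonneg (h i j k)) (sq_nonneg (h j k i))),
      mul_nonneg (sub_nonneg.2 hql)
        (add_nonneg (sq_nonneg (h i j k)) (sq_nonneg (h k i j))),
      mul_nonneg (sub_nonneg.2 hrl)
        (add_nonneg (sq_nonneg (h j k i)) (sq_nonneg (h k i j)))]
  · rw [if_neg hc, if_neg hc]
    simp
end

section
/- If P ∈ G(n,m) has Jordan angles θ₁,…,θₙ ∈ [0,π/2) relative to P₀ satisfying ∏ sec θ_α < 2, then tan θᵢ · tan θⱼ < 1 for all i ≠ j; equivalently θᵢ + θⱼ < π/2 for all i ≠ j. -/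
open Finset

/-- The inclusion 𝕌₂ ⊂ B_{JX}(P₀): if ∏ sec θ_α < 2 then tan θᵢ tan θⱼ < 1 for i ≠ j. -/
theorem stmt_10 (n : ℕ) (θ : Fin n → ℝ)
    (hθ : ∀ α, 0 ≤ θ α ∧ θ α < Real.pi / 2)
    (hv : (∏ α, (Real.cos (θ α))⁻¹) < 2) :
    ∀ i j, i ≠ j → Real.tan (θ i) * Real.tan (θ j) < 1 := by
  intro i j hij
  have hcos : ∀ α, 0 < Real.cos (θ α) := fun α =>
    Real.cos_pos_of_mem_Ioo ⟨by linarith [(hθ α).1, Real.pi_pos], (hθ α).2⟩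
  have hcle : ∀ α, Real.cos (θ α) ≤ 1 := fun α => Real.cos_le_one _
  have hone : ∀ α, 1 ≤ (Real.cos (θ α))⁻¹ := fun α =>
    (one_le_inv₀ (hcos α)).mpr (hcle α)
  have hsub : ({i, j} : Finset (Fin n)) ⊆ Finset.univ := Finset.subset_univ _
  have hpair : (∏ α ∈ ({i, j} : Finset (Fin n)), (Real.cos (θ α))⁻¹)
      ≤ ∏ α, (Real.cos (θ α))⁻¹ := by
    have hpos : (0:ℝ) < ∏ α ∈ ({i, j} : Finset (Fin n)), (Real.cos (θ α))⁻¹ :=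
      Finset.prod_pos fun α _ => inv_pos.mpr (hcos α)
    have hsd : (1:ℝ) ≤ ∏ α ∈ Finset.univ \ ({i, j} : Finset (Fin n)), (Real.cos (θ α))⁻¹ :=
      by
      have := Finset.prod_le_prod (f := fun _ : Fin n => (1:ℝ))
        (g := fun α => (Real.cos (θ α))⁻¹) (s := Finset.univ \ ({i, j} : Finset (Fin n)))
        (fun α _ => zero_le_one) (fun α _ => hone α)
      simpa using this
    calc (∏ α ∈ ({i, j} : Finset (Fin n)), (Real.cos (θ α))⁻¹)
        ≤ (∏ α ∈ Finset.univ \ ({i, j} : Finset (Fin n)), (Real.cos (θ α))⁻¹)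
          * ∏ α ∈ ({i, j} : Finset (Fin n)), (Real.cos (θ α))⁻¹ := by nlinarith
      _ = ∏ α, (Real.cos (θ α))⁻¹ := Finset.prod_sdiff hsub
  rw [Finset.prod_pair hij] at hpair
  have h2 : (Real.cos (θ i))⁻¹ * (Real.cos (θ j))⁻¹ < 2 := lt_of_le_of_lt hpair hv
  have hci := hcos i
  have hcj := hcos j
  have hcc : 1 / 2 < Real.cos (θ i) * Real.cos (θ j) := by
    rw [← mul_inv] at h2
    have := (inv_lt_iff_one_lt_mul₀ (by positivity)).mp h2
    nlinarith
  have hsum : 0 < Real.cos (θ i + θ j) := by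
    have hadd := Real.cos_add (θ i) (θ j)
    have hsub2 := Real.cos_sub (θ i) (θ j)
    have h1 : Real.cos (θ i - θ j) ≤ 1 := Real.cos_le_one _
    nlinarith
  have hss : Real.sin (θ i) * Real.sin (θ j) < Real.cos (θ i) * Real.cos (θ j) := by
    have hadd := Real.cos_add (θ i) (θ j)
    linarith
  rw [Real.tan_eq_sin_div_cos, Real.tan_eq_sin_div_cos]
  rw [div_mul_div_comm, div_lt_one (by positivity)]
  exact hss
end

section
/- Let n ≥ 2 and let (h_{α,ij}) for 1 ≤ α ≤ n (and additional α > n), 1 ≤ i,j ≤ n be reals symmetric in i,j, and λ₁,…,λₙ ≥ 0 with λᵢλⱼ ≤ λ₀ < 1 for i ≠ j. Then ∑_{α>n,i,j} h_{α,ij}² + ∑ᵢ(1+λᵢ²)h_{i,ii}² + ∑_{i≠j} h_{j,ii}² + ∑_{i≠j}(2+λᵢ²)h_{i,ij}² + 2∑_{i≠j} λᵢλⱼ h_{i,ji} h_{j,ii} + ∑_{i,j,k distinct}(h_{k,ij}² + λᵢλⱼ h_{i,jk}h_{j,ik}) ≥ (1−λ₀)·∑_{α,i,j} h_{α,ij}².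 -/
open Finset

lemma cyc3 {n : ℕ} (f : Fin n → Fin n → Fin n → ℝ) :
    ∑ i, ∑ j, ∑ k, f i j k = ∑ i, ∑ j, ∑ k, f j k i := by
  have h1 : ∑ i, ∑ j, ∑ k, f i j k = ∑ i, ∑ k, ∑ j, f i j k :=
    Finset.sum_congr rfl fun _ _ => Finset.sum_comm
  rw [h1, Finset.sum_comm]

lemma cyc3' {n : ℕ} (f : Fin n → Fin n → Fin n → ℝ) :
    ∑ i, ∑ j, ∑ k, f i j k = ∑ i, ∑ j, ∑ k, f k i j := by
  rw [cyc3 f, cyc3 (fun i j k => f j k i)]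

lemma sum_split {n : ℕ} (i : Fin n) (F : Fin n → ℝ) :
    ∑ j, F j = F i + ∑ j, if j = i then 0 else F j := by
  have key : ∀ j : Fin n, F j = (if j = i then F j else 0) + (if j = i then 0 else F j) := by
    intro j; split <;> simp
  rw [Finset.sum_congr rfl fun j _ => key j, Finset.sum_add_distrib]
  simp

lemma sum_castLE {n m : ℕ} (hnm : n ≤ m) (F : Fin m → ℝ) :
    ∑ α : Fin m, (if (α : ℕ) < n then F α else 0) = ∑ β : Fin n, F (Fin.castLE hnm β) := by
  rw [← Finset.sum_filter]
  have hfil : Finset.univ.filter (fun α : Fin m => (α : ℕ) < n)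
      = Finset.univ.map ⟨Fin.castLE hnm, Fin.castLE_injective hnm⟩ := by
    ext α
    simp only [Finset.mem_filter, Finset.mem_map, Finset.mem_univ, true_and,
      Function.Embedding.coeFn_mk]
    constructor
    · intro hα; exact ⟨⟨(α : ℕ), hα⟩, by ext; rfl⟩
    · rintro ⟨β, rfl⟩; exact β.isLt
  rw [hfil, Finset.sum_map]
  rfl

lemma dsum_add {n : ℕ} (F G : Fin n → Fin n → ℝ) :
    (∑ i, ∑ j, F i j) + (∑ i, ∑ j, G i j) = ∑ i, ∑ j, (F i j + G i j) := by
  simp [Finset.sum_add_distrib]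

lemma dsum_mul {n : ℕ} (a : ℝ) (F : Fin n → Fin n → ℝ) :
    a * (∑ i, ∑ j, F i j) = ∑ i, ∑ j, a * F i j := by
  simp [Finset.mul_sum]

lemma trp_add {n : ℕ} (F G : Fin n → Fin n → Fin n → ℝ) :
    (∑ i, ∑ j, ∑ k, F i j k) + (∑ i, ∑ j, ∑ k, G i j k)
      = ∑ i, ∑ j, ∑ k, (F i j k + G i j k) := by
  simp [Finset.sum_add_distrib]

lemma trp_mul {n : ℕ} (a : ℝ) (F : Fin n → Fin n → Fin n → ℝ) :
    a * (∑ i, ∑ j, ∑ k, F i j k) = ∑ i, ∑ j, ∑ k, a * F i j k := by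
  simp [Finset.mul_sum]

/-- The Hessian lower bound (eqn-BJ5)→(eqn-BJ14). The normal index α runs over
`Fin m` with `m ≥ n`; indices `α` with `(α : ℕ) < n` correspond to `1 ≤ α ≤ n`. -/
theorem stmt_12 (n m : ℕ) (hn : 2 ≤ n) (hnm : n ≤ m)
    (h : Fin m → Fin n → Fin n → ℝ)
    (hsym : ∀ α i j, h α i j = h α j i)
    (lam : Fin n → ℝ) (lam0 : ℝ)
    (hlam : ∀ i, 0 ≤ lam i) (hlam0 : lam0 < 1)
    (hsup : ∀ i j, i ≠ j → lam i * lam j ≤ lam0) :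
    (∑ α : Fin m, ∑ i : Fin n, ∑ j : Fin n,
        (if n ≤ (α : ℕ) then (h α i j) ^ 2 else 0))
    + (∑ i : Fin n, (1 + lam i ^ 2) * (h (Fin.castLE hnm i) i i) ^ 2)
    + (∑ i : Fin n, ∑ j : Fin n,
        (if i ≠ j then (h (Fin.castLE hnm j) i i) ^ 2 else 0))
    + (∑ i : Fin n, ∑ j : Fin n,
        (if i ≠ j then (2 + lam i ^ 2) * (h (Fin.castLE hnm i) i j) ^ 2 else 0))
    + 2 * (∑ i : Fin n, ∑ j : Fin n,
        (if i ≠ j then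
          lam i * lam j * h (Fin.castLE hnm i) j i * h (Fin.castLE hnm j) i i
        else 0))
    + (∑ i : Fin n, ∑ j : Fin n, ∑ k : Fin n,
        (if i ≠ j ∧ j ≠ k ∧ i ≠ k then
          (h (Fin.castLE hnm k) i j) ^ 2
          + lam i * lam j * h (Fin.castLE hnm i) j k * h (Fin.castLE hnm j) i k
        else 0))
    ≥ (1 - lam0) * ∑ α : Fin m, ∑ i : Fin n, ∑ j : Fin n, (h α i j) ^ 2 := by
  classical
  have hl0 : 0 ≤ lam0 := by
    have h01 : (⟨0, by omega⟩ : Fin n) ≠ ⟨1, by omega⟩ := by simp [Fin.ext_iff]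
    have h2 := hsup _ _ h01
    nlinarith [hlam (⟨0, by omega⟩ : Fin n), hlam (⟨1, by omega⟩ : Fin n)]
  -- Step A : split the total sum over α
  have hA : ∑ α : Fin m, ∑ i : Fin n, ∑ j : Fin n, h α i j ^ 2
      = (∑ α : Fin m, ∑ i : Fin n, ∑ j : Fin n, if n ≤ (α : ℕ) then h α i j ^ 2 else 0)
        + ∑ β : Fin n, ∑ i : Fin n, ∑ j : Fin n, h (Fin.castLE hnm β) i j ^ 2 := by
    rw [← sum_castLE hnm (fun α => ∑ i, ∑ j, h α i j ^ 2), ← Finset.sum_add_distrib]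
    apply Finset.sum_congr rfl
    intro α _
    by_cases hα : n ≤ (α : ℕ)
    · simp [hα, Nat.not_lt.mpr hα]
    · simp [hα, Nat.lt_of_not_le hα]
  -- Step B : decompose the n-indexed block
  have hB : ∑ β : Fin n, ∑ i : Fin n, ∑ j : Fin n, h (Fin.castLE hnm β) i j ^ 2
      = (∑ i : Fin n, h (Fin.castLE hnm i) i i ^ 2)
        + (∑ i : Fin n, ∑ j : Fin n, if i ≠ j then h (Fin.castLE hnm j) i i ^ 2 else 0)
        + 2 * (∑ i : Fin n, ∑ j : Fin n, if i ≠ j then h (Fin.castLE hnm i) i j ^ 2 else 0)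
        + (∑ i : Fin n, ∑ j : Fin n, ∑ k : Fin n,
            if i ≠ j ∧ j ≠ k ∧ i ≠ k then h (Fin.castLE hnm k) i j ^ 2 else 0) := by
      classical
      rw [cyc3' (fun β i j => h (Fin.castLE hnm β) i j ^ 2)]
      have inner : ∀ i j : Fin n, (∑ k : Fin n, h (Fin.castLE hnm k) i j ^ 2)
          = (if i = j then h (Fin.castLE hnm i) i i ^ 2
                + ∑ k : Fin n, (if k = i then 0 else h (Fin.castLE hnm k) i i ^ 2) else 0)
            + (if i = j then 0 else
                (h (Fin.castLE hnm i) i j ^ 2 + h (Fin.castLE hnm j) i j ^ 2)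
                + ∑ k : Fin n, (if k = i ∨ k = j then 0 else h (Fin.castLE hnm k) i j ^ 2)) := by
        intro i j
        by_cases hij : i = j
        · subst hij
          rw [if_pos rfl, if_pos rfl, add_zero]
          exact sum_split i _
        · rw [if_neg hij, if_neg hij, zero_add]
          rw [sum_split i (fun k => h (Fin.castLE hnm k) i j ^ 2)]
          rw [sum_split j (fun k => if k = i then 0 else h (Fin.castLE hnm k) i j ^ 2)]
          rw [if_neg (fun e => hij e.symm)]
          have e2 : ∀ k : Fin n,
              (if k = j then 0 else if k = i then 0 else h (Fin.castLE hnm k) i j ^ 2)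
              = (if k = i ∨ k = j then 0 else h (Fin.castLE hnm k) i j ^ 2) := by
            intro k; by_cases h1 : k = i <;> by_cases h2 : k = j <;> simp [h1, h2]
          rw [Finset.sum_congr rfl fun k _ => e2 k]
          ring
      have step1 : (∑ i : Fin n, ∑ j : Fin n, ∑ k : Fin n, h (Fin.castLE hnm k) i j ^ 2)
          = (∑ i : Fin n, ∑ j : Fin n, (if i = j then h (Fin.castLE hnm i) i i ^ 2
                + ∑ k : Fin n, (if k = i then 0 else h (Fin.castLE hnm k) i i ^ 2) else 0))
            + (∑ i : Fin n, ∑ j : Fin n, (if i = j then 0 else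
                (h (Fin.castLE hnm i) i j ^ 2 + h (Fin.castLE hnm j) i j ^ 2)
                + ∑ k : Fin n, (if k = i ∨ k = j then 0 else h (Fin.castLE hnm k) i j ^ 2))) := by
        rw [dsum_add]
        exact Finset.sum_congr rfl fun i _ => Finset.sum_congr rfl fun j _ => inner i j
      rw [step1]
      -- piece 1
      have p1 : (∑ i : Fin n, ∑ j : Fin n, (if i = j then h (Fin.castLE hnm i) i i ^ 2
            + ∑ k : Fin n, (if k = i then 0 else h (Fin.castLE hnm k) i i ^ 2) else 0))
          = (∑ i : Fin n, h (Fin.castLE hnm i) i i ^ 2)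
            + (∑ i : Fin n, ∑ j : Fin n, if i ≠ j then h (Fin.castLE hnm j) i i ^ 2 else 0) := by
        have e1 : ∀ i : Fin n, (∑ j : Fin n, (if i = j then h (Fin.castLE hnm i) i i ^ 2
              + ∑ k : Fin n, (if k = i then 0 else h (Fin.castLE hnm k) i i ^ 2) else 0))
            = h (Fin.castLE hnm i) i i ^ 2
              + ∑ j : Fin n, (if i ≠ j then h (Fin.castLE hnm j) i i ^ 2 else 0) := by
          intro i
          rw [Finset.sum_ite_eq]
          simp only [Finset.mem_univ, if_pos]
          congr 1
          refine Finset.sum_congr rfl fun j _ => ?_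
          rcases eq_or_ne j i with rfl | hji
          · simp
          · rw [if_neg hji, if_pos (Ne.symm hji)]
        rw [Finset.sum_congr rfl fun i _ => e1 i, Finset.sum_add_distrib]
      rw [p1]
      -- piece 2
      have e2 : ∀ i j : Fin n, (if i = j then 0 else
            (h (Fin.castLE hnm i) i j ^ 2 + h (Fin.castLE hnm j) i j ^ 2)
            + ∑ k : Fin n, (if k = i ∨ k = j then 0 else h (Fin.castLE hnm k) i j ^ 2))
          = ((if i ≠ j then h (Fin.castLE hnm i) i j ^ 2 else 0)
              + (if i ≠ j then h (Fin.castLE hnm j) i j ^ 2 else 0))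
            + ∑ k : Fin n, (if i ≠ j ∧ j ≠ k ∧ i ≠ k then h (Fin.castLE hnm k) i j ^ 2 else 0) := by
        intro i j
        by_cases hij : i = j
        · simp [hij]
        · rw [if_neg hij, if_pos hij, if_pos hij]
          rw [Finset.sum_congr rfl fun k (_ : k ∈ Finset.univ) => show
              (if k = i ∨ k = j then 0 else h (Fin.castLE hnm k) i j ^ 2)
              = (if i ≠ j ∧ j ≠ k ∧ i ≠ k then h (Fin.castLE hnm k) i j ^ 2 else 0) from by
            by_cases h1 : k = i
            · simp [h1]
            · by_cases h2 : k = j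
              · simp [h2]
              · rw [if_neg (by tauto), if_pos ⟨hij, fun e => h2 e.symm, fun e => h1 e.symm⟩]]
      have p2 : (∑ i : Fin n, ∑ j : Fin n, (if i = j then 0 else
            (h (Fin.castLE hnm i) i j ^ 2 + h (Fin.castLE hnm j) i j ^ 2)
            + ∑ k : Fin n, (if k = i ∨ k = j then 0 else h (Fin.castLE hnm k) i j ^ 2)))
          = ((∑ i : Fin n, ∑ j : Fin n, if i ≠ j then h (Fin.castLE hnm i) i j ^ 2 else 0)
              + (∑ i : Fin n, ∑ j : Fin n, if i ≠ j then h (Fin.castLE hnm j) i j ^ 2 else 0))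
            + (∑ i : Fin n, ∑ j : Fin n, ∑ k : Fin n,
                if i ≠ j ∧ j ≠ k ∧ i ≠ k then h (Fin.castLE hnm k) i j ^ 2 else 0) := by
        rw [dsum_add, dsum_add]
        exact Finset.sum_congr rfl fun i _ => Finset.sum_congr rfl fun j _ => e2 i j
      rw [p2]
      -- flip lemma
      have flip : (∑ i : Fin n, ∑ j : Fin n, if i ≠ j then h (Fin.castLE hnm j) i j ^ 2 else 0)
          = (∑ i : Fin n, ∑ j : Fin n, if i ≠ j then h (Fin.castLE hnm i) i j ^ 2 else 0) := by
        rw [Finset.sum_comm]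
        refine Finset.sum_congr rfl fun j _ => Finset.sum_congr rfl fun i _ => ?_
        rcases eq_or_ne i j with rfl | hne
        · simp
        · rw [if_pos hne.symm, if_pos hne, hsym]
      rw [flip]
      ring
  rw [hA, hB]
  -- nonnegativity of the extra-normal block
  have hT0 : 0 ≤ ∑ α : Fin m, ∑ i : Fin n, ∑ j : Fin n,
      if n ≤ (α : ℕ) then h α i j ^ 2 else 0 := by
    refine Finset.sum_nonneg fun _ _ => Finset.sum_nonneg fun _ _ => Finset.sum_nonneg
      fun _ _ => ?_
    positivity
  -- group 1
  have g1 : (1 - lam0) * (∑ i : Fin n, h (Fin.castLE hnm i) i i ^ 2)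
      ≤ ∑ i : Fin n, (1 + lam i ^ 2) * h (Fin.castLE hnm i) i i ^ 2 := by
    rw [Finset.mul_sum]
    refine Finset.sum_le_sum fun i _ => ?_
    nlinarith [sq_nonneg (h (Fin.castLE hnm i) i i), sq_nonneg (lam i),
      mul_nonneg (sq_nonneg (lam i)) (sq_nonneg (h (Fin.castLE hnm i) i i))]
  -- group 2
  have g2 : (1 - lam0) * ((∑ i : Fin n, ∑ j : Fin n, if i ≠ j then h (Fin.castLE hnm j) i i ^ 2 else 0)
        + 2 * (∑ i : Fin n, ∑ j : Fin n, if i ≠ j then h (Fin.castLE hnm i) i j ^ 2 else 0))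
      ≤ (∑ i : Fin n, ∑ j : Fin n, if i ≠ j then h (Fin.castLE hnm j) i i ^ 2 else 0)
        + (∑ i : Fin n, ∑ j : Fin n, if i ≠ j then (2 + lam i ^ 2) * h (Fin.castLE hnm i) i j ^ 2 else 0)
        + 2 * (∑ i : Fin n, ∑ j : Fin n, if i ≠ j then
            lam i * lam j * h (Fin.castLE hnm i) j i * h (Fin.castLE hnm j) i i else 0) := by
      rw [dsum_mul, dsum_mul, dsum_add, dsum_mul, dsum_add, dsum_add]
      refine Finset.sum_le_sum fun i _ => Finset.sum_le_sum fun j _ => ?_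
      by_cases hij : i = j
      · simp [hij]
      · rw [if_pos hij, if_pos hij, if_pos hij, if_pos hij]
        rw [hsym (Fin.castLE hnm i) j i]
        have hc0 : 0 ≤ lam i * lam j := mul_nonneg (hlam i) (hlam j)
        have hcle : lam i * lam j ≤ lam0 := hsup i j hij
        nlinarith [mul_nonneg hc0 (sq_nonneg (h (Fin.castLE hnm i) i j + h (Fin.castLE hnm j) i i)),
          mul_nonneg (sub_nonneg.2 hcle) (sq_nonneg (h (Fin.castLE hnm i) i j)),
          mul_nonneg (sub_nonneg.2 hcle) (sq_nonneg (h (Fin.castLE hnm j) i i)),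
          mul_nonneg (sq_nonneg (lam i)) (sq_nonneg (h (Fin.castLE hnm i) i j)),
          mul_nonneg hl0 (sq_nonneg (h (Fin.castLE hnm i) i j))]
  -- group 3
  have g3 : (1 - lam0) * (∑ i : Fin n, ∑ j : Fin n, ∑ k : Fin n,
        if i ≠ j ∧ j ≠ k ∧ i ≠ k then h (Fin.castLE hnm k) i j ^ 2 else 0)
      ≤ ∑ i : Fin n, ∑ j : Fin n, ∑ k : Fin n,
        if i ≠ j ∧ j ≠ k ∧ i ≠ k then
          h (Fin.castLE hnm k) i j ^ 2
          + lam i * lam j * h (Fin.castLE hnm i) j k * h (Fin.castLE hnm j) i k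
        else 0 := by
      have split5 : (∑ i : Fin n, ∑ j : Fin n, ∑ k : Fin n,
            if i ≠ j ∧ j ≠ k ∧ i ≠ k then
              h (Fin.castLE hnm k) i j ^ 2
              + lam i * lam j * h (Fin.castLE hnm i) j k * h (Fin.castLE hnm j) i k
            else 0)
          = (∑ i : Fin n, ∑ j : Fin n, ∑ k : Fin n,
              if i ≠ j ∧ j ≠ k ∧ i ≠ k then h (Fin.castLE hnm k) i j ^ 2 else 0)
            + (∑ i : Fin n, ∑ j : Fin n, ∑ k : Fin n,
              if i ≠ j ∧ j ≠ k ∧ i ≠ k then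
                lam i * lam j * h (Fin.castLE hnm i) j k * h (Fin.castLE hnm j) i k else 0) := by
        rw [trp_add]
        refine Finset.sum_congr rfl fun i _ => Finset.sum_congr rfl fun j _ =>
          Finset.sum_congr rfl fun k _ => ?_
        split <;> simp
      have hT4a : (∑ i : Fin n, ∑ j : Fin n, ∑ k : Fin n,
            if i ≠ j ∧ j ≠ k ∧ i ≠ k then h (Fin.castLE hnm k) i j ^ 2 else 0)
          = (∑ i : Fin n, ∑ j : Fin n, ∑ k : Fin n,
            if i ≠ j ∧ j ≠ k ∧ i ≠ k then h (Fin.castLE hnm i) j k ^ 2 else 0) := by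
        rw [cyc3 (fun i j k => if i ≠ j ∧ j ≠ k ∧ i ≠ k then h (Fin.castLE hnm k) i j ^ 2 else 0)]
        exact Finset.sum_congr rfl fun i _ => Finset.sum_congr rfl fun j _ =>
          Finset.sum_congr rfl fun k _ => if_congr (by tauto) rfl rfl
      have hT4b : (∑ i : Fin n, ∑ j : Fin n, ∑ k : Fin n,
            if i ≠ j ∧ j ≠ k ∧ i ≠ k then h (Fin.castLE hnm k) i j ^ 2 else 0)
          = (∑ i : Fin n, ∑ j : Fin n, ∑ k : Fin n,
            if i ≠ j ∧ j ≠ k ∧ i ≠ k then h (Fin.castLE hnm j) i k ^ 2 else 0) := by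
        rw [cyc3' (fun i j k => if i ≠ j ∧ j ≠ k ∧ i ≠ k then h (Fin.castLE hnm k) i j ^ 2 else 0)]
        refine Finset.sum_congr rfl fun i _ => Finset.sum_congr rfl fun j _ =>
          Finset.sum_congr rfl fun k _ => ?_
        rw [hsym (Fin.castLE hnm j) k i]
        exact if_congr (by tauto) rfl rfl
      have key : 0 ≤ (∑ i : Fin n, ∑ j : Fin n, ∑ k : Fin n,
            if i ≠ j ∧ j ≠ k ∧ i ≠ k then
              lam i * lam j * h (Fin.castLE hnm i) j k * h (Fin.castLE hnm j) i k else 0)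
          + ((lam0 / 2) * (∑ i : Fin n, ∑ j : Fin n, ∑ k : Fin n,
              if i ≠ j ∧ j ≠ k ∧ i ≠ k then h (Fin.castLE hnm i) j k ^ 2 else 0)
            + (lam0 / 2) * (∑ i : Fin n, ∑ j : Fin n, ∑ k : Fin n,
              if i ≠ j ∧ j ≠ k ∧ i ≠ k then h (Fin.castLE hnm j) i k ^ 2 else 0)) := by
        rw [trp_mul, trp_mul, trp_add, trp_add]
        refine Finset.sum_nonneg fun i _ => Finset.sum_nonneg fun j _ =>
          Finset.sum_nonneg fun k _ => ?_
        by_cases hd : i ≠ j ∧ j ≠ k ∧ i ≠ k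
        · rw [if_pos hd, if_pos hd, if_pos hd]
          have hc0 : 0 ≤ lam i * lam j := mul_nonneg (hlam i) (hlam j)
          have hcle : lam i * lam j ≤ lam0 := hsup i j hd.1
          nlinarith [mul_nonneg hc0 (sq_nonneg (h (Fin.castLE hnm i) j k + h (Fin.castLE hnm j) i k)),
            mul_nonneg (sub_nonneg.2 hcle) (sq_nonneg (h (Fin.castLE hnm i) j k)),
            mul_nonneg (sub_nonneg.2 hcle) (sq_nonneg (h (Fin.castLE hnm j) i k))]
        · simp [hd]
      rw [split5]
      nlinarith [key, hT4a, hT4b]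
  nlinarith [hT0, g1, g2, g3, mul_nonneg hl0 hT0]
end
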